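/- arXiv:2002.07668 — 2 statements merged into one kernel-verified Lean document; each statement's English description precedes it below -/
import Mathlib

section
/- Let 0 < λ < 1, α > 0, C > 0, x ∈ ℝ^m, and f ∈ L²(B(x,1)). Suppose there are real numbers τ_1, τ_2, τ_3, … such that for every integer k ≥ 0 one has ‖f − (τ_1 + ⋯ + τ_k)‖_{B(x,λ^k)} ≤ C λ^{kα} (the sum being empty when k = 0). Then Σ_k |τ_k| < ∞, and setting τ = Σ_{k≥1} τ_k there is a constant C′ = κ(α, λ, m)·C such that ‖f − τ‖_{B(x,r)} ≤ C′ r^α for all 0 < r < 1. -/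
noncomputable section

open MeasureTheory Metric

namespace ConeSchauder

/-- Euclidean space `ℝ^m`. -/
abbrev E (m : ℕ) := EuclideanSpace ℝ (Fin m)

/-- Index of the first coordinate of the `a`-th `ℝ²` factor. -/
def w1 (m n : ℕ) (h : 2 * n ≤ m) (a : Fin n) : Fin m :=
  ⟨2 * a.1, by have := a.isLt; omega⟩

/-- Index of the second coordinate of the `a`-th `ℝ²` factor. -/
def w2 (m n : ℕ) (h : 2 * n ≤ m) (a : Fin n) : Fin m :=
  ⟨2 * a.1 + 1, by have := a.isLt; omega⟩

/-- The radial coordinate `r_a` of the `a`-th conical factor. -/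
def ra (m n : ℕ) (h : 2 * n ≤ m) (a : Fin n) (x : E m) : ℝ :=
  Real.sqrt (x (w1 m n h a) ^ 2 + x (w2 m n h a) ^ 2)

/-- The singular set `S = ∪_a {w_a = 0}`. -/
def Sing (m n : ℕ) (h : 2 * n ≤ m) : Set (E m) :=
  {x | ∃ a : Fin n, x (w1 m n h a) = 0 ∧ x (w2 m n h a) = 0}

/-- The inner product `⟨G(x)⁻¹ v, v'⟩`, where `G` is the coefficient matrix of the cone
metric: the `a`-th `2×2` block of `G(x)⁻¹` is `β_a⁻² Id + (1 - β_a⁻²) w_a w_aᵀ/|w_a|²`,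
and the block corresponding to the Euclidean directions is the identity. -/
def blockInner (b wx wy vx vy vx' vy' : ℝ) : ℝ :=
  b⁻¹ ^ 2 * (vx * vx' + vy * vy')
    + (1 - b⁻¹ ^ 2) * ((wx * vx + wy * vy) * (wx * vx' + wy * vy')) / (wx ^ 2 + wy ^ 2)

def gInner (m n : ℕ) (h : 2 * n ≤ m) (β : Fin n → ℝ) (x : E m) (v v' : Fin m → ℝ) : ℝ :=
  (∑ a : Fin n, blockInner (β a) (x (w1 m n h a)) (x (w2 m n h a))
      (v (w1 m n h a)) (v (w2 m n h a)) (v' (w1 m n h a)) (v' (w2 m n h a)))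
  + ∑ i : Fin m, (if 2 * n ≤ i.1 then v i * v' i else 0)

/-- The (Euclidean) gradient vector of `ψ` at `x`, via `fderiv` (which is defined almost
everywhere for Lipschitz functions, with junk value `0` elsewhere). -/
def grad {m : ℕ} (ψ : E m → ℝ) (x : E m) : Fin m → ℝ :=
  fun i => fderiv ℝ ψ x (EuclideanSpace.single i 1)

/-- Test functions on `Ω`: compactly supported Lipschitz functions with support in `Ω`. -/
def IsTest {m : ℕ} (Ω : Set (E m)) (ψ : E m → ℝ) : Prop :=
  (∃ K, LipschitzWith K ψ) ∧ HasCompactSupport ψ ∧ tsupport ψ ⊆ Ω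

/-- `Du` is the componentwise weak (Euclidean) gradient of `u` on `Ω`. -/
def IsWeakGradOn {m : ℕ} (Ω : Set (E m)) (u : E m → ℝ) (Du : E m → Fin m → ℝ) : Prop :=
  ∀ ψ : E m → ℝ, IsTest Ω ψ → ∀ i : Fin m,
    ∫ x in Ω, u x * grad ψ x i = - ∫ x in Ω, Du x i * ψ x

/-- `u ∈ W^{1,2}(Ω)`, with weak gradient `Du`. -/
def MemW12 {m : ℕ} (Ω : Set (E m)) (u : E m → ℝ) (Du : E m → Fin m → ℝ) : Prop :=
  MemLp u 2 (volume.restrict Ω) ∧ (∀ i, MemLp (fun x => Du x i) 2 (volume.restrict Ω))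
    ∧ IsWeakGradOn Ω u Du

/-- `u ∈ W^{1,2}(Ω)` (with weak gradient `Du`) is a weak solution of `Δ_g u = f` on `Ω`:
`∫_Ω ⟨G(x)⁻¹ ∇u, ∇ψ⟩ = -∫_Ω f ψ` for every compactly supported Lipschitz test function. -/
def IsWeakSol (m n : ℕ) (h : 2 * n ≤ m) (β : Fin n → ℝ) (Ω : Set (E m))
    (u : E m → ℝ) (Du : E m → Fin m → ℝ) (f : E m → ℝ) : Prop :=
  MemW12 Ω u Du ∧
  ∀ ψ : E m → ℝ, IsTest Ω ψ →
    ∫ x in Ω, gInner m n h β x (Du x) (grad ψ x) = - ∫ x in Ω, f x * ψ x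

/-- Partial derivative in the `i`-th coordinate direction. -/
def pd {m : ℕ} (i : Fin m) (u : E m → ℝ) : E m → ℝ :=
  fun x => fderiv ℝ u x (EuclideanSpace.single i 1)

/-- The first order operator `∂_{r_a} u = ⟨w_a, ∇_{w_a} u⟩ / |w_a|`. -/
def Dra (m n : ℕ) (h : 2 * n ≤ m) (a : Fin n) (u : E m → ℝ) : E m → ℝ :=
  fun x => (x (w1 m n h a) * pd (w1 m n h a) u x + x (w2 m n h a) * pd (w2 m n h a) u x)
    / ra m n h a x

/-- The first order operator `r_a⁻¹ ∂_{θ_a} u = ⟨w_a^⊥, ∇_{w_a} u⟩ / |w_a|`. -/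
def Dth (m n : ℕ) (h : 2 * n ≤ m) (a : Fin n) (u : E m → ℝ) : E m → ℝ :=
  fun x => (x (w1 m n h a) * pd (w2 m n h a) u x - x (w2 m n h a) * pd (w1 m n h a) u x)
    / ra m n h a x

/-- The conical Laplacian `Δ_{β_a} = ∂²_{r_a} + r_a⁻¹ ∂_{r_a} + β_a⁻² r_a⁻² ∂²_{θ_a}`. -/
def conLap (m n : ℕ) (h : 2 * n ≤ m) (β : Fin n → ℝ) (a : Fin n) (u : E m → ℝ) : E m → ℝ :=
  fun x => Dra m n h a (Dra m n h a u) x + Dra m n h a u x / ra m n h a x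
    + (β a)⁻¹ ^ 2 * Dth m n h a (Dth m n h a u) x

/-- The collection `D₂` of second order operators. -/
def D2 (m n : ℕ) (h : 2 * n ≤ m) (β : Fin n → ℝ) : Set ((E m → ℝ) → E m → ℝ) :=
  {D | (∃ i j : Fin m, 2 * n ≤ i.1 ∧ 2 * n ≤ j.1 ∧ D = fun u => pd i (pd j u))
    ∨ (∃ (a : Fin n) (i : Fin m), 2 * n ≤ i.1 ∧
        (D = (fun u => Dra m n h a (pd i u)) ∨ D = fun u => Dth m n h a (pd i u)))
    ∨ (∃ a b : Fin n, a ≠ b ∧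
        (D = (fun u => Dra m n h a (Dra m n h b u)) ∨
         D = (fun u => Dth m n h a (Dth m n h b u)) ∨
         D = fun u => Dra m n h a (Dth m n h b u)))
    ∨ (∃ a : Fin n, D = conLap m n h β a)
    ∨ (∃ a : Fin n, β a < 1/2 ∧
        (D = (fun u => Dra m n h a (Dra m n h a u)) ∨
         D = (fun u => Dth m n h a (Dth m n h a u)) ∨
         D = fun u => Dth m n h a (Dra m n h a u)))}

/-- `μ = min {1} ∪ {1/β_a − 1 : β_a ≥ 1/2} ∪ {1/β_a − 2 : β_a < 1/2}`. -/
def mu (n : ℕ) (β : Fin n → ℝ) : ℝ :=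
  sInf ({1} ∪ {t | ∃ a, 1/2 ≤ β a ∧ t = 1 / β a - 1}
    ∪ {t | ∃ a, β a < 1/2 ∧ t = 1 / β a - 2})

/-- Generators of the space `H_{≤2}` of subquadratic harmonic functions. -/
def H2gens (m n : ℕ) (h : 2 * n ≤ m) (β : Fin n → ℝ) : Set (E m → ℝ) :=
  {P | P = fun _ => (1:ℝ)}
  ∪ {P | ∃ i : Fin m, 2 * n ≤ i.1 ∧ P = fun x => x i}
  ∪ {P | ∃ a : Fin n, 1/2 ≤ β a ∧
      (P = (fun x => ra m n h a x ^ (1 / β a - 1) * x (w1 m n h a)) ∨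
       P = fun x => ra m n h a x ^ (1 / β a - 1) * x (w2 m n h a))}
  ∪ {P | ∃ i j : Fin m, 2 * n ≤ i.1 ∧ 2 * n ≤ j.1 ∧ i ≠ j ∧
      (P = (fun x => x i * x j) ∨ P = fun x => x i ^ 2 - x j ^ 2)}
  ∪ {P | ∃ a b : Fin n, a ≠ b ∧ P = fun x => ra m n h a x ^ 2 - ra m n h b x ^ 2}
  ∪ {P | ∃ (a : Fin n) (i : Fin m), 2 * n ≤ i.1 ∧
      P = fun x => ra m n h a x ^ 2 - 2 * x i ^ 2}

/-- The space `H_{≤2}` of subquadratic harmonic functions, as the span of its generators. -/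
def H2 (m n : ℕ) (h : 2 * n ≤ m) (β : Fin n → ℝ) : Submodule ℝ (E m → ℝ) :=
  Submodule.span ℝ (H2gens m n h β)

/-- Scale invariant `L²` norm `‖u‖_{B(x,ρ)} = (ρ^{-m} ∫_{B(x,ρ)} u²)^{1/2}`. -/
def nrm (m : ℕ) (x : E m) (ρ : ℝ) (u : E m → ℝ) : ℝ :=
  Real.sqrt ((ρ ^ m)⁻¹ * ∫ y in ball x ρ, u y ^ 2)

/-- The `L²(Ω)` norm. -/
def l2 {m : ℕ} (Ω : Set (E m)) (u : E m → ℝ) : ℝ :=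
  Real.sqrt (∫ y in Ω, u y ^ 2)

/-- `u` is positively homogeneous of (real) degree `d`. -/
def HomDeg {m : ℕ} (d : ℝ) (u : E m → ℝ) : Prop :=
  ∀ c : ℝ, 0 < c → ∀ x, u (c • x) = c ^ d * u x

/-- `u` is weakly harmonic (for the cone metric) on every ball around the origin. -/
def WeaklyHarmonicLoc (m n : ℕ) (h : 2 * n ≤ m) (β : Fin n → ℝ) (u : E m → ℝ) : Prop :=
  ∀ R : ℝ, 0 < R → ∃ Du, IsWeakSol m n h β (ball 0 R) u Du (fun _ => 0)

/-- The squared norm `|Hess_g u|²` of the Hessian of `u` with respect to the cone metric,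
computed in the `g`-orthonormal frame `{∂_{r_a}, (β_a r_a)⁻¹ ∂_{θ_a}, ∂_{s_i}}`. -/
def hessSq (m n : ℕ) (h : 2 * n ≤ m) (β : Fin n → ℝ) (u : E m → ℝ) (x : E m) : ℝ :=
  (∑ a : Fin n,
      (Dra m n h a (Dra m n h a u) x ^ 2
        + 2 * ((β a)⁻¹ * Dra m n h a (Dth m n h a u) x) ^ 2
        + ((β a)⁻¹ ^ 2 * Dth m n h a (Dth m n h a u) x
            + Dra m n h a u x / ra m n h a x) ^ 2))
  + (∑ a : Fin n, ∑ b : Fin n, if a ≠ b then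
        Dra m n h a (Dra m n h b u) x ^ 2
        + ((β b)⁻¹ * Dra m n h a (Dth m n h b u) x) ^ 2
        + ((β a)⁻¹ * Dth m n h a (Dra m n h b u) x) ^ 2
        + ((β a)⁻¹ * (β b)⁻¹ * Dth m n h a (Dth m n h b u) x) ^ 2
      else 0)
  + 2 * (∑ a : Fin n, ∑ i : Fin m, if 2 * n ≤ i.1 then
        Dra m n h a (pd i u) x ^ 2 + ((β a)⁻¹ * Dth m n h a (pd i u) x) ^ 2
      else 0)
  + ∑ i : Fin m, ∑ j : Fin m, if 2 * n ≤ i.1 ∧ 2 * n ≤ j.1 then pd i (pd j u) x ^ 2 else 0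

/-!
Two consecutive approximations differ by the constant `τ k`, and both are `O(C λ^{kα})` on
`B(x, λ^{k+1})` (the larger ball costs a factor `λ^{-m/2}`), so `|τ k| = O(C λ^{kα})`. Hence the
`τ k` are summable with tails `O(C λ^{kα})`, which gives the estimate for `f - τ` at the radii
`λ^k`; a radius `r ∈ (λ^{k+1}, λ^k]` then costs only the factors `λ^{-m/2}` and `λ^{-α}`.
-/

section ScaleInvariantNorm

variable {m : ℕ} {x : E m} {ρ ρ' : ℝ} {u v : E m → ℝ}

lemma memLp_ball_of_le (h : ρ' ≤ ρ) (hu : MemLp u 2 (volume.restrict (ball x ρ))) :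
    MemLp u 2 (volume.restrict (ball x ρ')) :=
  hu.mono_measure (Measure.restrict_mono (ball_subset_ball h) le_rfl)

lemma memLp_ball_const (c : ℝ) : MemLp (fun _ : E m => c) 2 (volume.restrict (ball x ρ)) :=
  have : IsFiniteMeasure (volume.restrict (ball x ρ)) :=
    isFiniteMeasure_restrict.2 measure_ball_lt_top.ne
  memLp_const c

lemma measureReal_ball_pos (x : E m) (hρ : 0 < ρ) : 0 < volume.real (ball x ρ) :=
  ENNReal.toReal_pos (measure_ball_pos volume x hρ).ne' measure_ball_lt_top.ne

lemma nrm_nonneg : 0 ≤ nrm m x ρ u := Real.sqrt_nonneg _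

lemma sqrt_integral_sq_eq_eLpNorm {α : Type*} [MeasurableSpace α] {μ : Measure α} {g : α → ℝ}
    (hg : MemLp g 2 μ) : √(∫ y, g y ^ 2 ∂μ) = (eLpNorm g 2 μ).toReal := by
  rw [hg.eLpNorm_eq_integral_rpow_norm two_ne_zero ENNReal.ofNat_ne_top,
    ENNReal.toReal_ofReal (by positivity), Real.sqrt_eq_rpow]
  norm_num

lemma nrm_eq_eLpNorm (hu : MemLp u 2 (volume.restrict (ball x ρ))) :
    nrm m x ρ u = √((ρ ^ m)⁻¹) * (eLpNorm u 2 (volume.restrict (ball x ρ))).toReal := by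
  rw [nrm, Real.sqrt_mul' _ (integral_nonneg fun y => sq_nonneg (u y)),
    sqrt_integral_sq_eq_eLpNorm hu]

lemma nrm_sub_le (hu : MemLp u 2 (volume.restrict (ball x ρ)))
    (hv : MemLp v 2 (volume.restrict (ball x ρ))) :
    nrm m x ρ (fun y => u y - v y) ≤ nrm m x ρ u + nrm m x ρ v := by
  change nrm m x ρ (u - v) ≤ _
  rw [nrm_eq_eLpNorm (hu.sub hv), nrm_eq_eLpNorm hu, nrm_eq_eLpNorm hv, ← mul_add,
    ← ENNReal.toReal_add hu.eLpNorm_ne_top hv.eLpNorm_ne_top]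
  gcongr
  · exact ENNReal.add_ne_top.2 ⟨hu.eLpNorm_ne_top, hv.eLpNorm_ne_top⟩
  · exact eLpNorm_sub_le hu.1 hv.1 one_le_two

lemma nrm_le_of_radius_le (hρ' : 0 < ρ') (h : ρ' ≤ ρ)
    (hu : MemLp u 2 (volume.restrict (ball x ρ))) :
    nrm m x ρ' u ≤ √((ρ / ρ') ^ m) * nrm m x ρ u := by
  have hρ : 0 < ρ := hρ'.trans_le h
  have hint : ∫ y in ball x ρ', u y ^ 2 ≤ ∫ y in ball x ρ, u y ^ 2 :=
    setIntegral_mono_set hu.integrable_sq (.of_forall fun y => sq_nonneg (u y))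
      (ball_subset_ball h).eventuallyLE
  rw [nrm, nrm, ← Real.sqrt_mul (by positivity)]
  apply Real.sqrt_le_sqrt
  calc (ρ' ^ m)⁻¹ * ∫ y in ball x ρ', u y ^ 2 ≤ (ρ' ^ m)⁻¹ * ∫ y in ball x ρ, u y ^ 2 := by
        gcongr
    _ = (ρ / ρ') ^ m * ((ρ ^ m)⁻¹ * ∫ y in ball x ρ, u y ^ 2) := by
        rw [div_pow]
        field_simp

lemma nrm_const (hρ : 0 < ρ) (c : ℝ) :
    nrm m x ρ (fun _ => c) = |c| * √(volume.real (ball (0 : E m) 1)) := by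
  have hvol : volume.real (ball x ρ) = ρ ^ m * volume.real (ball (0 : E m) 1) := by
    rw [measureReal_def, Measure.addHaar_ball_of_pos volume x hρ, finrank_euclideanSpace_fin,
      ENNReal.toReal_mul, ENNReal.toReal_ofReal (by positivity), measureReal_def]
  rw [nrm, setIntegral_const, hvol, smul_eq_mul, ← Real.sqrt_sq_eq_abs,
    ← Real.sqrt_mul (sq_nonneg c)]
  congr 1
  field_simp

end ScaleInvariantNorm

lemma abs_sum_range_sub_tsum_le_of_abs_le_geometric {a : ℕ → ℝ} {K q : ℝ} (hq0 : 0 ≤ q)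
    (hq1 : q < 1) (ha : ∀ k, |a k| ≤ K * q ^ k) (k : ℕ) :
    |∑ j ∈ Finset.range k, a j - ∑' j, a j| ≤ K * q ^ k / (1 - q) := by
  have hsum : Summable a := Summable.of_norm_bounded
    ((summable_geometric_of_lt_one hq0 hq1).mul_left K) ha
  refine dist_le_of_le_geometric_of_tendsto q K hq1 (fun n => ?_) hsum.hasSum.tendsto_sum_nat k
  rw [Finset.sum_range_succ, dist_self_add_right, Real.norm_eq_abs]
  exact ha n

section ScaleApproximation

variable {m : ℕ} {x : E m} {lam α C : ℝ} {f : E m → ℝ} {τ : ℕ → ℝ}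

lemma memLp_sub_sum_range (hlam0 : 0 < lam) (hlam1 : lam ≤ 1)
    (hf : MemLp f 2 (volume.restrict (ball x 1))) (k : ℕ) :
    MemLp (fun y => f y - ∑ j ∈ Finset.range k, τ j) 2 (volume.restrict (ball x (lam ^ k))) :=
  (memLp_ball_of_le (pow_le_one₀ hlam0.le hlam1) hf).sub (memLp_ball_const _)

lemma abs_le_geometric_of_nrm_sub_sum_range_le (hlam0 : 0 < lam) (hlam1 : lam ≤ 1) (hα : 0 ≤ α)
    (hC : 0 ≤ C) (hf : MemLp f 2 (volume.restrict (ball x 1)))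
    (hyp : ∀ k : ℕ, nrm m x (lam ^ k) (fun y => f y - ∑ j ∈ Finset.range k, τ j)
      ≤ C * (lam ^ k) ^ α) (k : ℕ) :
    |τ k| ≤ (√(lam⁻¹ ^ m) + 1) * C / √(volume.real (ball (0 : E m) 1)) * (lam ^ α) ^ k := by
  have hV : 0 < √(volume.real (ball (0 : E m) 1)) :=
    Real.sqrt_pos.2 (measureReal_ball_pos 0 one_pos)
  have hk : lam ^ (k + 1) ≤ lam ^ k := pow_le_pow_of_le_one hlam0.le hlam1 k.le_succ
  have hS := memLp_sub_sum_range (τ := τ) hlam0 hlam1 hf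
  have hratio : lam ^ k / lam ^ (k + 1) = lam⁻¹ := by
    rw [pow_succ, div_mul_cancel_left₀ (pow_ne_zero k hlam0.ne')]
  have hmul : |τ k| * √(volume.real (ball (0 : E m) 1))
      ≤ (√(lam⁻¹ ^ m) + 1) * C * (lam ^ k) ^ α :=
    calc |τ k| * √(volume.real (ball (0 : E m) 1))
        = nrm m x (lam ^ (k + 1)) (fun y => (f y - ∑ j ∈ Finset.range k, τ j)
            - (f y - ∑ j ∈ Finset.range (k + 1), τ j)) := by
          rw [← nrm_const (x := x) (pow_pos hlam0 (k + 1))]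
          simp only [Finset.sum_range_succ, sub_sub_sub_cancel_left, add_sub_cancel_left]
      _ ≤ nrm m x (lam ^ (k + 1)) (fun y => f y - ∑ j ∈ Finset.range k, τ j)
            + nrm m x (lam ^ (k + 1)) (fun y => f y - ∑ j ∈ Finset.range (k + 1), τ j) :=
          nrm_sub_le (memLp_ball_of_le hk (hS k)) (hS (k + 1))
      _ ≤ √(lam⁻¹ ^ m) * (C * (lam ^ k) ^ α) + C * (lam ^ k) ^ α := by
          gcongr
          · refine (nrm_le_of_radius_le (pow_pos hlam0 _) hk (hS k)).trans ?_
            rw [hratio]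
            gcongr
            exact hyp k
          · exact (hyp (k + 1)).trans (by gcongr)
      _ = (√(lam⁻¹ ^ m) + 1) * C * (lam ^ k) ^ α := by ring
  rw [Real.rpow_pow_comm hlam0.le, div_mul_eq_mul_div, le_div_iff₀ hV]
  exact hmul

lemma nrm_sub_tsum_le (hlam0 : 0 < lam) (hlam1 : lam ≤ 1)
    (hf : MemLp f 2 (volume.restrict (ball x 1)))
    (hyp : ∀ k : ℕ, nrm m x (lam ^ k) (fun y => f y - ∑ j ∈ Finset.range k, τ j)
      ≤ C * (lam ^ k) ^ α) (k : ℕ) :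
    nrm m x (lam ^ k) (fun y => f y - ∑' j, τ j)
      ≤ C * (lam ^ k) ^ α
        + |∑ j ∈ Finset.range k, τ j - ∑' j, τ j| * √(volume.real (ball (0 : E m) 1)) :=
  calc nrm m x (lam ^ k) (fun y => f y - ∑' j, τ j)
      = nrm m x (lam ^ k) (fun y => (f y - ∑ j ∈ Finset.range k, τ j)
          - (∑' j, τ j - ∑ j ∈ Finset.range k, τ j)) := by
        simp only [sub_sub_sub_cancel_right]
    _ ≤ _ := by
        refine (nrm_sub_le (memLp_sub_sum_range hlam0 hlam1 hf k) (memLp_ball_const _)).trans ?_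
        rw [nrm_const (pow_pos hlam0 _), abs_sub_comm]
        gcongr
        exact hyp k

end ScaleApproximation

lemma nrm_le_rpow_of_nrm_pow_le {m : ℕ} {x : E m} {g : E m → ℝ} {lam α D r : ℝ}
    (hlam0 : 0 < lam) (hlam1 : lam < 1) (hα : 0 ≤ α)
    (hg : MemLp g 2 (volume.restrict (ball x 1)))
    (hD : ∀ k : ℕ, nrm m x (lam ^ k) g ≤ D * (lam ^ k) ^ α) (hr0 : 0 < r) (hr1 : r < 1) :
    nrm m x r g ≤ √(lam⁻¹ ^ m) * lam ^ (-α) * D * r ^ α := by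
  obtain ⟨k, hrk, hkr⟩ := exists_nat_pow_near_of_lt_one hr0 hr1.le hlam0 hlam1
  have hD0 : 0 ≤ D := by simpa using nrm_nonneg.trans (hD 0)
  have hratio : lam ^ k / r ≤ lam⁻¹ := by
    rw [div_le_iff₀ hr0, ← div_eq_inv_mul, le_div_iff₀' hlam0, ← pow_succ']
    exact hrk.le
  have hscale : (lam ^ k) ^ α ≤ lam ^ (-α) * r ^ α := by
    rw [Real.rpow_neg hlam0.le, inv_mul_eq_div, le_div_iff₀' (Real.rpow_pos_of_pos hlam0 α),
      ← Real.mul_rpow hlam0.le (by positivity), ← pow_succ']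
    exact Real.rpow_le_rpow (by positivity) hrk.le hα
  calc nrm m x r g
      ≤ √((lam ^ k / r) ^ m) * nrm m x (lam ^ k) g :=
        nrm_le_of_radius_le hr0 hkr (memLp_ball_of_le (pow_le_one₀ hlam0.le hlam1.le) hg)
    _ ≤ √(lam⁻¹ ^ m) * (D * (lam ^ (-α) * r ^ α)) :=
        mul_le_mul (Real.sqrt_le_sqrt (by gcongr)) ((hD k).trans (by gcongr)) nrm_nonneg
          (Real.sqrt_nonneg _)
    _ = √(lam⁻¹ ^ m) * lam ^ (-α) * D * r ^ α := by ring

/-- summing the scale-by-scale approximations. -/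
theorem stmt8 (m : ℕ) (lam α : ℝ) (hlam0 : 0 < lam) (hlam1 : lam < 1) (hα : 0 < α) :
    ∃ κ : ℝ, 0 < κ ∧ ∀ (x : E m) (f : E m → ℝ) (τ : ℕ → ℝ) (C : ℝ), 0 < C →
      MemLp f 2 (volume.restrict (ball x 1)) →
      (∀ k : ℕ, nrm m x (lam ^ k) (fun y => f y - ∑ j ∈ Finset.range k, τ j)
        ≤ C * (lam ^ k) ^ α) →
      Summable (fun k => |τ k|) ∧
      ∀ r : ℝ, 0 < r → r < 1 →
        nrm m x r (fun y => f y - ∑' k, τ k) ≤ (κ * C) * r ^ α := by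
  have hq0 : 0 ≤ lam ^ α := Real.rpow_nonneg hlam0.le α
  have hq1 : lam ^ α < 1 := Real.rpow_lt_one hlam0.le hlam1 hα
  have hV : 0 < √(volume.real (ball (0 : E m) 1)) :=
    Real.sqrt_pos.2 (measureReal_ball_pos 0 one_pos)
  have h1q : 0 < 1 - lam ^ α := by linarith
  set K := 1 + (√(lam⁻¹ ^ m) + 1) / (1 - lam ^ α)
  refine ⟨√(lam⁻¹ ^ m) * lam ^ (-α) * K, by positivity, ?_⟩
  intro x f τ C hC hf hyp
  have hτ := abs_le_geometric_of_nrm_sub_sum_range_le hlam0 hlam1.le hα.le hC.le hf hyp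
  refine ⟨.of_nonneg_of_le (fun k => abs_nonneg _) hτ
    ((summable_geometric_of_lt_one hq0 hq1).mul_left _), fun r hr0 hr1 => ?_⟩
  have hdyadic (k : ℕ) :
      nrm m x (lam ^ k) (fun y => f y - ∑' j, τ j) ≤ K * C * (lam ^ k) ^ α := by
    grw [nrm_sub_tsum_le hlam0 hlam1.le hf hyp k,
      abs_sum_range_sub_tsum_le_of_abs_le_geometric hq0 hq1 hτ k, Real.rpow_pow_comm hlam0.le]
    apply le_of_eq
    simp only [K]
    field_simp
  calc nrm m x r (fun y => f y - ∑' j, τ j)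
      ≤ √(lam⁻¹ ^ m) * lam ^ (-α) * (K * C) * r ^ α :=
        nrm_le_rpow_of_nrm_pow_le hlam0 hlam1 hα.le (hf.sub (memLp_ball_const _)) hdyadic hr0 hr1
    _ = _ := by ring

end ConeSchauder
end
end

section
/- Let n ≥ 1 be an integer, 0 < λ < 1, 0 < ε₀ < 1 and c > 1. Then there exists N = N(n, λ, ε₀, c) (for instance N = n·((log ε₀^{−1} + log c)/log λ^{−1} + 1)) such that for every tuple of real numbers 0 ≤ r_1 ≤ r_2 ≤ ⋯ ≤ r_n, the set of integers k for which none of the following conditions holds has at most N elements: (i) λ^{−k} r_1 > c; (ii) there is j ∈ {1,…,n−1} with λ^{−k} r_{j+1} > c and λ^{−k} r_j < ε₀; (iii) λ^{−k} r_n < ε₀. -/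
noncomputable section

open MeasureTheory Metric

namespace ConeSchauder

/-!
For each `a`, the scales `k` with `ε₀ ≤ λ^{-k} r_a ≤ c` form a window of at most
`⌈log (c/ε₀) / log λ⁻¹⌉ + 1` consecutive integers, because `λ^{-k} r_a` grows by the factor
`λ⁻¹` at each step. A scale outside all `n` windows is good: if (i) and (ii) fail, then
`λ^{-k} r_1 ≤ c` forces `λ^{-k} r_1 < ε₀`, which in turn forces `λ^{-k} r_2 ≤ c`, hence
`λ^{-k} r_2 < ε₀`, and so on up to `λ^{-k} r_n < ε₀`, which is (iii).
-/

theorem finite_and_ncard_le_of_sub_le {s : Set ℤ} {M : ℤ} (h : ∀ k ∈ s, ∀ k' ∈ s, k' - k ≤ M) :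
    s.Finite ∧ s.ncard ≤ (M + 1).toNat := by
  rcases s.eq_empty_or_nonempty with rfl | ⟨k₁, hk₁⟩
  · simp
  obtain ⟨k₀, hk₀, hmin⟩ :=
    Int.exists_least_of_bdd ⟨k₁ - M, fun k hk => by linarith [h k hk k₁ hk₁]⟩ ⟨k₁, hk₁⟩
  have hsub : s ⊆ (Finset.Icc k₀ (k₀ + M) : Set ℤ) := fun k hk => by
    simpa using ⟨hmin k hk, by linarith [h k₀ hk₀ k hk]⟩
  refine ⟨(Finset.Icc _ _).finite_toSet.subset hsub, ?_⟩
  calc s.ncard ≤ (Finset.Icc k₀ (k₀ + M) : Set ℤ).ncard :=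
        Set.ncard_le_ncard hsub (Finset.finite_toSet _)
    _ = (M + 1).toNat := by rw [Set.ncard_coe_finset, Int.card_Icc]; congr 1; ring

def scaleWindow (lam lo hi ρ : ℝ) : Set ℤ :=
  {k | lam ^ (-k) * ρ ∈ Set.Icc lo hi}

section ScaleWindow

variable {lam lo hi : ℝ}

theorem sub_le_of_mem_scaleWindow (hlam0 : 0 < lam) (hlam1 : lam < 1) (hlo : 0 < lo)
    {ρ : ℝ} {k k' : ℤ} (hk : k ∈ scaleWindow lam lo hi ρ) (hk' : k' ∈ scaleWindow lam lo hi ρ) :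
    k' - k ≤ ⌈Real.log (hi / lo) / Real.log lam⁻¹⌉ := by
  have hgrowth : lam⁻¹ ^ (k' - k) * lo ≤ hi :=
    calc lam⁻¹ ^ (k' - k) * lo ≤ lam⁻¹ ^ (k' - k) * (lam ^ (-k) * ρ) := by
          gcongr; exact hk.1
      _ = lam ^ (-k') * ρ := by
          rw [inv_zpow', ← mul_assoc, ← zpow_add₀ hlam0.ne']; ring_nf
      _ ≤ hi := hk'.2
  have hlog : ((k' - k : ℤ) : ℝ) * Real.log lam⁻¹ ≤ Real.log (hi / lo) := by
    rw [← Real.log_zpow]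
    exact Real.log_le_log (by positivity) ((le_div_iff₀ hlo).2 hgrowth)
  have hlog_pos : 0 < Real.log lam⁻¹ := Real.log_pos ((one_lt_inv₀ hlam0).2 hlam1)
  exact_mod_cast ((le_div_iff₀ hlog_pos).2 hlog).trans (Int.le_ceil _)

theorem finite_and_ncard_le_of_subset_iUnion_scaleWindow (hlam0 : 0 < lam) (hlam1 : lam < 1)
    (hlo : 0 < lo) {n : ℕ} {r : Fin n → ℝ} {B : Set ℤ}
    (hB : B ⊆ ⋃ a, scaleWindow lam lo hi (r a)) :
    B.Finite ∧ B.ncard ≤ n * (⌈Real.log (hi / lo) / Real.log lam⁻¹⌉ + 1).toNat := by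
  have hwindow (a : Fin n) := finite_and_ncard_le_of_sub_le fun _ hk _ hk' =>
    sub_le_of_mem_scaleWindow (hi := hi) (ρ := r a) hlam0 hlam1 hlo hk hk'
  have hfin : (⋃ a, scaleWindow lam lo hi (r a)).Finite :=
    Set.finite_iUnion fun a => (hwindow a).1
  refine ⟨hfin.subset hB, ?_⟩
  calc B.ncard ≤ (⋃ a, scaleWindow lam lo hi (r a)).ncard := Set.ncard_le_ncard hB hfin
    _ ≤ ∑ a, (scaleWindow lam lo hi (r a)).ncard := Set.ncard_iUnion_le_of_fintype _
    _ ≤ ∑ _a : Fin n, (⌈Real.log (hi / lo) / Real.log lam⁻¹⌉ + 1).toNat :=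
        Finset.sum_le_sum fun a _ => (hwindow a).2
    _ = _ := by simp

end ScaleWindow

theorem exists_mem_Icc_of_head_le_of_le_last {n : ℕ} (hn : 1 ≤ n) {x : Fin n → ℝ} {lo hi : ℝ}
    (hhead : x ⟨0, hn⟩ ≤ hi)
    (hstep : ∀ j (hj : j + 1 < n), hi < x ⟨j + 1, hj⟩ → lo ≤ x ⟨j, Nat.lt_of_succ_lt hj⟩)
    (hlast : lo ≤ x ⟨n - 1, Nat.sub_one_lt_of_lt hn⟩) : ∃ a, x a ∈ Set.Icc lo hi := by
  by_contra! hnone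
  simp only [Set.mem_Icc, not_and, not_le] at hnone
  have hsmall : ∀ j (hj : j < n), x ⟨j, hj⟩ < lo := by
    intro j
    induction j with
    | zero => exact fun _ => not_le.1 fun h => (hnone _ h).not_ge hhead
    | succ j ih =>
      exact fun hj => not_le.1 fun h => (ih (by omega)).not_ge (hstep j hj (hnone _ h))
  exact (hsmall (n - 1) (by omega)).not_ge hlast

/-- finitely many bad scales: the arithmetic content. -/
theorem stmt12 (n : ℕ) (hn : 1 ≤ n) (lam ε₀ c : ℝ)
    (hlam0 : 0 < lam) (hlam1 : lam < 1) (hε0 : 0 < ε₀) :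
    ∃ N : ℕ, ∀ r : Fin n → ℝ, (∀ a, 0 ≤ r a) → Monotone r →
      {k : ℤ | ¬ (c < lam ^ (-k) * r ⟨0, hn⟩
          ∨ (∃ j : ℕ, ∃ hj : j + 1 < n, c < lam ^ (-k) * r ⟨j + 1, hj⟩
              ∧ lam ^ (-k) * r ⟨j, by omega⟩ < ε₀)
          ∨ lam ^ (-k) * r ⟨n - 1, by omega⟩ < ε₀)}.Finite ∧
      {k : ℤ | ¬ (c < lam ^ (-k) * r ⟨0, hn⟩
          ∨ (∃ j : ℕ, ∃ hj : j + 1 < n, c < lam ^ (-k) * r ⟨j + 1, hj⟩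
              ∧ lam ^ (-k) * r ⟨j, by omega⟩ < ε₀)
          ∨ lam ^ (-k) * r ⟨n - 1, by omega⟩ < ε₀)}.ncard ≤ N := by
  refine ⟨n * (⌈Real.log (c / ε₀) / Real.log lam⁻¹⌉ + 1).toNat, fun r _ _ => ?_⟩
  refine finite_and_ncard_le_of_subset_iUnion_scaleWindow (r := r) hlam0 hlam1 hε0 fun k hk => ?_
  simp only [Set.mem_ofPred_eq, not_or, not_lt, not_exists, not_and] at hk
  obtain ⟨hhead, hstep, hlast⟩ := hk
  exact Set.mem_iUnion.2 (exists_mem_Icc_of_head_le_of_le_last hn hhead hstep hlast)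

end ConeSchauder
end
end
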